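/- arXiv:2202.08123 — 6 statements merged into one kernel-verified Lean document; each statement's English description precedes it below -/
import Mathlib

section
/- Let s > 0 and 0 < t ≤ 1/2 be real numbers and let G = (V, E) be a finite simple graph with V nonempty such that ‖V‖ ≥ (s + t + 1)·|V|. Then there exists a partition (A, B) of V with both A and B nonempty such that ‖A‖ ≥ s·|A| and ‖B‖ ≥ t·|B|. -/
open Finset

/-- `G.edgesIn X` is the number of edges of the induced subgraph `G[X]`. -/
noncomputable def SimpleGraph.edgesIn {V : Type*} (G : SimpleGraph V) (X : Finset V) : ℕ :=
  {e ∈ G.edgeSet | ∀ v ∈ e, v ∈ X}.ncard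

/-!
Let `n = |V|` and `m = ‖V‖`. Pick a non-isolated vertex `u` and a neighbour `v` of `u` of minimum
degree. Summing degrees over `u` and its neighbours gives `d(u) (d(v) + 1) ≤ 2m`, which together
with `d(u), d(v) ≤ n - 1` forces `n (d(u) + d(v)) ≤ 2m + n (n - 1)`. Take `B = {u, v}`, which spans
one edge (enough since `t ≤ 1/2`), and `A` its complement. Then
`‖A‖ = m - d(u) - d(v) + 1 ≥ (n - 2) (m / n - 1) ≥ (n - 2) (s + t) ≥ s |A|`.
-/

/-- For `n a ≥ m` the bound reduces to `a + m / a ≤ n + m / n`, i.e. `(n - a) (n a - m) ≥ 0`. -/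
theorem mul_add_le_add_mul_sub_one {a b n m : ℝ} (ha : 0 < a) (han : a ≤ n) (hbn : b ≤ n - 1)
    (hab : a * (b + 1) ≤ m) : n * (a + b) ≤ m + n * (n - 1) := by
  rcases le_or_gt (n * a) m with hna | hna
  · nlinarith
  · refine le_of_mul_le_mul_left ?_ ha
    nlinarith [mul_nonneg (sub_nonneg.2 han) (sub_nonneg.2 hna.le)]

namespace SimpleGraph

theorem edgesIn_pair_of_adj {V : Type*} [DecidableEq V] {G : SimpleGraph V} {u v : V}
    (h : G.Adj u v) : G.edgesIn {u, v} = 1 := by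
  rw [edgesIn, Set.ncard_eq_one]
  refine ⟨s(u, v), Set.eq_singleton_iff_unique_mem.2 ⟨⟨h, by simp⟩, ?_⟩⟩
  rintro e ⟨he, hmem⟩
  induction e using Sym2.ind with
  | _ x y =>
    have hxy : x ≠ y := he.ne
    simp only [Sym2.mem_iff, forall_eq_or_imp, forall_eq, mem_insert, mem_singleton] at hmem
    rcases hmem with ⟨rfl | rfl, rfl | rfl⟩ <;> simp_all [Sym2.eq_swap]

variable {V : Type*} [Fintype V] (G : SimpleGraph V) [DecidableRel G.Adj]

theorem four_le_card_of_card_lt_card_edgeFinset (h : Fintype.card V < #G.edgeFinset) :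
    4 ≤ Fintype.card V := by
  have hchoose := G.card_edgeFinset_le_card_choose_two
  rw [Nat.choose_two_right] at hchoose
  by_contra! hn
  have : Fintype.card V * (Fintype.card V - 1) ≤ Fintype.card V * 2 :=
    Nat.mul_le_mul_left _ (by omega)
  have := Nat.div_le_div_right (c := 2) this
  omega

variable [DecidableEq V]

theorem edgesIn_eq_card_filter (X : Finset V) :
    G.edgesIn X = #{e ∈ G.edgeFinset | ∀ v ∈ e, v ∈ X} := by
  rw [edgesIn, ← Set.ncard_coe_finset, coe_filter]
  simp only [mem_edgeFinset]

theorem edgesIn_univ : G.edgesIn univ = #G.edgeFinset := by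
  simp [edgesIn_eq_card_filter]

variable {G} {u v : V}

theorem card_incidenceFinset_union_add_one_of_adj (h : G.Adj u v) :
    #(G.incidenceFinset u ∪ G.incidenceFinset v) + 1 = G.degree u + G.degree v := by
  have hinter : G.incidenceFinset u ∩ G.incidenceFinset v = {s(u, v)} := by
    rw [← coe_inj, coe_inter, coe_incidenceFinset, coe_incidenceFinset, coe_singleton,
      G.incidenceSet_inter_incidenceSet_of_adj h]
  rw [← card_incidenceFinset_eq_degree, ← card_incidenceFinset_eq_degree,
    ← card_union_add_card_inter, hinter, card_singleton]

variable (G) in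
theorem edgesIn_compl_add_card_incidenceFinset_union (u v : V) :
    G.edgesIn {u, v}ᶜ + #(G.incidenceFinset u ∪ G.incidenceFinset v) = #G.edgeFinset := by
  have hmeet : {e ∈ G.edgeFinset | ¬∀ w ∈ e, w ∈ ({u, v} : Finset V)ᶜ} =
      G.incidenceFinset u ∪ G.incidenceFinset v := by
    ext e
    simp only [mem_union, mem_filter, mem_incidenceFinset, incidenceSet, Set.mem_ofPred_eq,
      mem_edgeFinset, mem_compl, mem_insert, mem_singleton, not_forall, not_not, exists_prop,
      and_or_left, exists_or, exists_eq_right]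
  rw [edgesIn_eq_card_filter, ← hmeet, card_filter_add_card_filter_not]

theorem edgesIn_compl_pair_add_degree_add_degree (h : G.Adj u v) :
    G.edgesIn {u, v}ᶜ + G.degree u + G.degree v = #G.edgeFinset + 1 := by
  have := G.edgesIn_compl_add_card_incidenceFinset_union u v
  have := card_incidenceFinset_union_add_one_of_adj h
  omega

theorem exists_adj_degree_mul_degree_add_one_le {w : V} (h : G.Adj u w) :
    ∃ v, G.Adj u v ∧ G.degree u * (G.degree v + 1) ≤ 2 * #G.edgeFinset := by
  obtain ⟨v, hv, hmin⟩ := exists_min_image (G.neighborFinset u) (fun x => G.degree x)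
    ⟨w, (G.mem_neighborFinset u w).2 h⟩
  refine ⟨v, (G.mem_neighborFinset u v).1 hv, ?_⟩
  have hlow : G.degree u * G.degree v ≤ ∑ x ∈ G.neighborFinset u, G.degree x := by
    simpa [card_neighborFinset_eq_degree] using card_nsmul_le_sum _ _ _ hmin
  have hup : ∑ x ∈ insert u (G.neighborFinset u), G.degree x ≤ 2 * #G.edgeFinset :=
    G.sum_degrees_eq_twice_card_edges ▸ sum_le_sum_of_subset (subset_univ _)
  rw [sum_insert (G.notMem_neighborFinset_self u)] at hup
  linarith

theorem exists_adj_card_mul_degree_add_degree_le {w : V} (h : G.Adj u w) :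
    ∃ v, G.Adj u v ∧ (Fintype.card V : ℝ) * (G.degree u + G.degree v) ≤
      2 * #G.edgeFinset + Fintype.card V * (Fintype.card V - 1) := by
  obtain ⟨v, huv, hdeg⟩ := exists_adj_degree_mul_degree_add_one_le h
  refine ⟨v, huv, mul_add_le_add_mul_sub_one ?_ ?_ ?_ (by exact_mod_cast hdeg)⟩
  · exact_mod_cast G.degree_pos_iff_exists_adj u |>.2 ⟨w, h⟩
  · exact_mod_cast (G.degree_lt_card_verts u).le
  · have := G.degree_lt_card_verts v
    rw [le_sub_iff_add_le]
    exact_mod_cast this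

end SimpleGraph

open SimpleGraph in
/-- If `s > 0`, `0 < t ≤ 1/2` and `‖V‖ ≥ (s+t+1)|V|`, then `V` has a partition into
nonempty parts `A`, `B` with `‖A‖ ≥ s|A|` and `‖B‖ ≥ t|B|`. -/
theorem avg_degree_partition_small_t {V : Type*} [Fintype V] [Nonempty V] [DecidableEq V]
    (G : SimpleGraph V) (s t : ℝ) (hs : 0 < s) (ht0 : 0 < t) (ht1 : t ≤ 1 / 2)
    (h : (s + t + 1) * (Fintype.card V : ℝ) ≤ (G.edgesIn Finset.univ : ℝ)) :
    ∃ A B : Finset V, A.Nonempty ∧ B.Nonempty ∧ Disjoint A B ∧ A ∪ B = Finset.univ ∧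
      s * (A.card : ℝ) ≤ (G.edgesIn A : ℝ) ∧ t * (B.card : ℝ) ≤ (G.edgesIn B : ℝ) := by
  classical
  rw [edgesIn_univ] at h
  have hn : Fintype.card V < #G.edgeFinset := by
    have : (1 : ℝ) ≤ Fintype.card V := by exact_mod_cast Fintype.card_pos
    exact_mod_cast (show (Fintype.card V : ℝ) < #G.edgeFinset by nlinarith)
  have h4 := G.four_le_card_of_card_lt_card_edgeFinset hn
  obtain ⟨u, w, huw⟩ := G.ne_bot_iff_exists_adj.1 (edgeFinset_nonempty.1 (card_pos.1 (by omega)))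
  obtain ⟨v, huv, hdeg⟩ := G.exists_adj_card_mul_degree_add_degree_le huw
  refine ⟨{u, v}ᶜ, {u, v}, card_pos.1 (by rw [card_compl, card_pair huv.ne]; omega),
    insert_nonempty _ _, disjoint_compl_left, compl_sup_eq_top, ?_, ?_⟩
  · have hA : ((G.edgesIn {u, v}ᶜ : ℕ) : ℝ) + G.degree u + G.degree v = #G.edgeFinset + 1 := by
      exact_mod_cast edgesIn_compl_pair_add_degree_add_degree huv
    have h4' : (4 : ℝ) ≤ Fintype.card V := by exact_mod_cast h4
    rw [card_compl, card_pair huv.ne, Nat.cast_sub (by omega), Nat.cast_two]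
    refine le_of_mul_le_mul_left ?_ (show (0 : ℝ) < Fintype.card V by linarith)
    nlinarith [congrArg ((Fintype.card V : ℝ) * ·) hA,
      mul_le_mul_of_nonneg_right h (show (0 : ℝ) ≤ Fintype.card V - 2 by linarith),
      mul_nonneg (mul_nonneg ht0.le (show (0 : ℝ) ≤ Fintype.card V by linarith))
        (show (0 : ℝ) ≤ Fintype.card V - 2 by linarith)]
  · rw [card_pair huv.ne, edgesIn_pair_of_adj huv]
    push_cast
    linarith
end

section
/- Let s, t > 0 be real numbers and let G = (V, E) be a finite simple graph with ‖V‖ ≥ (s + t + 1)·|V|. Suppose A, B ⊆ V are disjoint nonempty sets with ‖A‖ ≥ s·|A|, ‖B‖ ≥ t·|B|, and (‖A‖ − s·|A|) + (‖B‖ − t·|B|) ≥ T(A ∪ B) − 1. Then there exists a partition (A′, B′) of V with both A′ and B′ nonempty such that ‖A′‖ ≥ s·|A′| and ‖B′‖ ≥ t·|B′|. -/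
/-!
If neither `(Bᶜ, B)` nor `(A, Aᶜ)` is a valid partition, then `‖Bᶜ‖ < s|Bᶜ|` and `‖Aᶜ‖ < t|Aᶜ|`.
Adding these to the edge-count inequality `‖A‖ + ‖B‖ + ‖V‖ ≤ ‖Aᶜ‖ + ‖Bᶜ‖ + ‖A ∪ B‖`, the density of
`V` and the bound on the excess of `A ∪ B`, everything cancels except `|V| < |A ∪ B| + 1`.
So `A ∪ B = V`, and `(A, B)` itself is the partition.
-/

open Finset

namespace SimpleGraph
variable {V : Type*} (G : SimpleGraph V)

theorem edgesIn_eq_sum [DecidableEq V] [Fintype G.edgeSet] (X : Finset V) :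
    G.edgesIn X = ∑ e ∈ G.edgeFinset, if e ∈ X.sym2 then 1 else 0 := by
  rw [← card_filter, edgesIn, ← Set.ncard_coe_finset]
  congr 1
  ext e
  simp [mem_sym2_iff]

theorem edgesIn_add_edgesIn_add_edgesIn_univ_le [Fintype V] [DecidableEq V] {A B : Finset V}
    (hAB : Disjoint A B) :
    G.edgesIn A + G.edgesIn B + G.edgesIn univ ≤
      G.edgesIn Aᶜ + G.edgesIn Bᶜ + G.edgesIn (A ∪ B) := by
  classical
  -- Edge by edge, the two sides differ only on edges outside `A ∪ B`, counted twice on the right.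
  simp only [edgesIn_eq_sum, ← sum_add_distrib]
  refine sum_le_sum fun e _ ↦ ?_
  induction e using Sym2.ind with
  | _ x y =>
    have hx : x ∈ A → x ∉ B := fun h ↦ Finset.disjoint_left.mp hAB h
    have hy : y ∈ A → y ∉ B := fun h ↦ Finset.disjoint_left.mp hAB h
    simp only [mk_mem_sym2_iff, mem_univ, mem_compl, mem_union]
    by_cases x ∈ A <;> by_cases y ∈ A <;> by_cases x ∈ B <;> by_cases y ∈ B <;> simp_all

theorem card_le_card_union_of_edgesIn_compl_lt [Fintype V] [DecidableEq V] {s t : ℝ}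
    (hG : (s + t + 1) * (Fintype.card V : ℝ) ≤ G.edgesIn univ) {A B : Finset V}
    (hAB : Disjoint A B)
    (hexcess : (G.edgesIn (A ∪ B) : ℝ) - (s + t + 1) * #(A ∪ B) - 1 ≤
      ((G.edgesIn A : ℝ) - s * #A) + ((G.edgesIn B : ℝ) - t * #B))
    (hBc : (G.edgesIn Bᶜ : ℝ) < s * #Bᶜ) (hAc : (G.edgesIn Aᶜ : ℝ) < t * #Aᶜ) :
    Fintype.card V ≤ #(A ∪ B) := by
  have key : (G.edgesIn A + G.edgesIn B + G.edgesIn univ : ℝ) ≤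
      G.edgesIn Aᶜ + G.edgesIn Bᶜ + G.edgesIn (A ∪ B) := by
    exact_mod_cast G.edgesIn_add_edgesIn_add_edgesIn_univ_le hAB
  have hcardAc : (#Aᶜ : ℝ) = Fintype.card V - #A := by
    rw [← card_compl_add_card A]; push_cast; ring
  have hcardBc : (#Bᶜ : ℝ) = Fintype.card V - #B := by
    rw [← card_compl_add_card B]; push_cast; ring
  have hcardAB : (#(A ∪ B) : ℝ) = #A + #B := by
    exact_mod_cast card_union_of_disjoint hAB
  rw [hcardAc] at hAc
  rw [hcardBc] at hBc
  rw [hcardAB] at hexcess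
  have : (Fintype.card V : ℝ) < #(A ∪ B) + 1 := by linarith
  exact Nat.lt_add_one_iff.mp (by exact_mod_cast this)

end SimpleGraph

theorem partition_of_strong_pair_general {V : Type*} [Fintype V] [DecidableEq V]
    (G : SimpleGraph V) (s t : ℝ)
    (hG : (s + t + 1) * (Fintype.card V : ℝ) ≤ (G.edgesIn Finset.univ : ℝ))
    (A B : Finset V) (hA : A.Nonempty) (hB : B.Nonempty) (hAB : Disjoint A B)
    (h1 : s * (A.card : ℝ) ≤ (G.edgesIn A : ℝ))
    (h2 : t * (B.card : ℝ) ≤ (G.edgesIn B : ℝ))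
    (h3 : max 0 ((G.edgesIn (A ∪ B) : ℝ) - (s + t + 1) * (A ∪ B).card) - 1 ≤
      ((G.edgesIn A : ℝ) - s * A.card) + ((G.edgesIn B : ℝ) - t * B.card)) :
    ∃ A' B' : Finset V, A'.Nonempty ∧ B'.Nonempty ∧ Disjoint A' B' ∧ A' ∪ B' = Finset.univ ∧
      s * (A'.card : ℝ) ≤ (G.edgesIn A' : ℝ) ∧ t * (B'.card : ℝ) ≤ (G.edgesIn B' : ℝ) := by
  by_cases hcover : A ∪ B = univ
  · exact ⟨A, B, hA, hB, hAB, hcover, h1, h2⟩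
  by_cases hBc : s * #Bᶜ ≤ (G.edgesIn Bᶜ : ℝ)
  · exact ⟨Bᶜ, B, hA.mono (subset_compl_iff_disjoint_right.mpr hAB), hB, disjoint_compl_left,
      compl_sup_eq_top, hBc, h2⟩
  refine ⟨A, Aᶜ, hA, hB.mono (subset_compl_iff_disjoint_left.mpr hAB), disjoint_compl_right,
    union_compl A, h1, le_of_not_gt fun hAc ↦ hcover ?_⟩
  refine eq_univ_of_card _ (le_antisymm (card_le_univ _) ?_)
  exact G.card_le_card_union_of_edgesIn_compl_lt hG hAB
    ((sub_le_sub_right (le_max_right _ _) 1).trans h3) (not_le.mp hBc) hAc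

/-- Given `‖V‖ ≥ (s+t+1)|V|` and disjoint nonempty sets `A`, `B` with `‖A‖ ≥ s|A|`,
`‖B‖ ≥ t|B|` and `(‖A‖ - s|A|) + (‖B‖ - t|B|) ≥ T(A ∪ B) - 1`
(where `T(X) = max {0, ‖X‖ - (s+t+1)|X|}`), there is a partition `(A', B')` of `V`
into nonempty parts with `‖A'‖ ≥ s|A'|` and `‖B'‖ ≥ t|B'|`. -/
theorem partition_of_strong_pair {V : Type*} [Fintype V] [DecidableEq V]
    (G : SimpleGraph V) (s t : ℝ) (hs : 0 < s) (ht : 0 < t)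
    (hG : (s + t + 1) * (Fintype.card V : ℝ) ≤ (G.edgesIn Finset.univ : ℝ))
    (A B : Finset V) (hA : A.Nonempty) (hB : B.Nonempty) (hAB : Disjoint A B)
    (h1 : s * (A.card : ℝ) ≤ (G.edgesIn A : ℝ))
    (h2 : t * (B.card : ℝ) ≤ (G.edgesIn B : ℝ))
    (h3 : max 0 ((G.edgesIn (A ∪ B) : ℝ) - (s + t + 1) * (A ∪ B).card) - 1 ≤
      ((G.edgesIn A : ℝ) - s * A.card) + ((G.edgesIn B : ℝ) - t * B.card)) :
    ∃ A' B' : Finset V, A'.Nonempty ∧ B'.Nonempty ∧ Disjoint A' B' ∧ A' ∪ B' = Finset.univ ∧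
      s * (A'.card : ℝ) ≤ (G.edgesIn A' : ℝ) ∧ t * (B'.card : ℝ) ≤ (G.edgesIn B' : ℝ) :=
  partition_of_strong_pair_general G s t hG A B hA hB hAB h1 h2 h3
end

section
/- Let s, t > 0 be real numbers and let G = (V, E) be a finite simple graph with |V| ≥ 2 such that ‖V‖ ≥ (s + t + 1)·|V| and such that every nonempty proper subset X ⊊ V satisfies ‖X‖ < (s + t + 1)·|X|. Let T := ‖V‖ − (s + t + 1)·|V|. Then every vertex v of G has degree d(v) > s + t + 1 + T, and consequently |V| > s + t + 2 + T. -/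
/-!
Deleting a vertex `v` removes exactly `d(v)` edges, so `‖V‖ = ‖V - v‖ + d(v)`. Minimality bounds
`‖V - v‖ < (s + t + 1)(|V| - 1)`, which rearranges to `d(v) > s + t + 1 + T`; the bound on `|V|`
follows from `d(v) ≤ |V| - 1`.
-/

open Finset

namespace SimpleGraph

variable {V : Type*} [Fintype V] [DecidableEq V] (G : SimpleGraph V) [DecidableRel G.Adj]

theorem edgesIn_univ_erase_add_degree (v : V) :
    G.edgesIn (univ.erase v) + G.degree v = G.edgesIn univ := by
  have h_erase : G.edgesIn (univ.erase v) = (G.edgeSet \ G.incidenceSet v).ncard := by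
    unfold edgesIn
    congr 1
    ext e
    simp only [Set.mem_ofPred_eq, Set.mem_sdiff, incidenceSet, mem_erase, mem_univ, and_true]
    exact and_congr_right fun he =>
      ⟨fun h ⟨_, hv⟩ => h v hv rfl, fun h w hw hwv => h ⟨he, hwv ▸ hw⟩⟩
  have h_univ : G.edgesIn univ = G.edgeSet.ncard := by
    simp [edgesIn]
  have h_degree : G.degree v = (G.incidenceSet v).ncard := by
    rw [← card_incidenceFinset_eq_degree, ← coe_incidenceFinset, Set.ncard_coe_finset]
  rw [h_erase, h_univ, h_degree]
  exact Set.ncard_sdiff_add_ncard_of_subset (G.incidenceSet_subset v)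

theorem excess_lt_degree_of_edgesIn_univ_erase_lt {c : ℝ} {v : V}
    (hv : (G.edgesIn (univ.erase v) : ℝ) < c * #(univ.erase v)) :
    c + ((G.edgesIn univ : ℝ) - c * Fintype.card V) < G.degree v := by
  have h_split : (G.edgesIn (univ.erase v) : ℝ) + G.degree v = G.edgesIn univ := by
    exact_mod_cast G.edgesIn_univ_erase_add_degree v
  have h_card : (#(univ.erase v) : ℝ) = Fintype.card V - 1 := by
    rw [card_erase_of_mem (mem_univ v), card_univ,
      Nat.cast_pred (Fintype.card_pos_iff.mpr ⟨v⟩)]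
  rw [h_card] at hv
  linarith

end SimpleGraph

theorem min_counterexample_degree_general {V : Type*} [Fintype V]
    (G : SimpleGraph V) [DecidableRel G.Adj] (s t : ℝ)
    (hcard : 2 ≤ Fintype.card V)
    (hmin : ∀ X : Finset V, X.Nonempty → X ≠ Finset.univ →
      (G.edgesIn X : ℝ) < (s + t + 1) * X.card) :
    (∀ v : V, s + t + 1 + ((G.edgesIn Finset.univ : ℝ) - (s + t + 1) * Fintype.card V) <
      (G.degree v : ℝ)) ∧
    s + t + 2 + ((G.edgesIn Finset.univ : ℝ) - (s + t + 1) * Fintype.card V) <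
      (Fintype.card V : ℝ) := by
  classical
  have h_degree : ∀ v : V, s + t + 1 + ((G.edgesIn univ : ℝ) - (s + t + 1) * Fintype.card V) <
      G.degree v := fun v =>
    G.excess_lt_degree_of_edgesIn_univ_erase_lt <| hmin _
      ((erase_nonempty (mem_univ v)).mpr (univ_nontrivial_iff.mpr
        (Fintype.one_lt_card_iff_nontrivial.mp hcard)))
      (erase_ne_self.mpr (mem_univ v))
  refine ⟨h_degree, ?_⟩
  obtain ⟨v⟩ : Nonempty V := Fintype.card_pos_iff.mp (by omega)
  have h_le : (G.degree v : ℝ) + 1 ≤ Fintype.card V := by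
    exact_mod_cast G.degree_lt_card_verts v
  linarith [h_degree v]

/-- If `‖V‖ ≥ (s+t+1)|V|` but every nonempty proper subset `X` satisfies
`‖X‖ < (s+t+1)|X|`, then, with `T = ‖V‖ - (s+t+1)|V|`, every vertex has degree
`> s + t + 1 + T`, and consequently `|V| > s + t + 2 + T`. -/
theorem min_counterexample_degree {V : Type*} [Fintype V] [DecidableEq V]
    (G : SimpleGraph V) [DecidableRel G.Adj] (s t : ℝ) (hs : 0 < s) (ht : 0 < t)
    (hcard : 2 ≤ Fintype.card V)
    (h : (s + t + 1) * (Fintype.card V : ℝ) ≤ (G.edgesIn Finset.univ : ℝ))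
    (hmin : ∀ X : Finset V, X.Nonempty → X ≠ Finset.univ →
      (G.edgesIn X : ℝ) < (s + t + 1) * X.card) :
    (∀ v : V, s + t + 1 + ((G.edgesIn Finset.univ : ℝ) - (s + t + 1) * Fintype.card V) <
      (G.degree v : ℝ)) ∧
    s + t + 2 + ((G.edgesIn Finset.univ : ℝ) - (s + t + 1) * Fintype.card V) <
      (Fintype.card V : ℝ) :=
  min_counterexample_degree_general G s t hcard hmin
end

section
/- Let s, t > 0 be real numbers with p := (s+1)/(s+t+2) and p̄ := (t+1)/(s+t+2), and let G = (V, E) be a finite simple graph whose minimum degree satisfies δ(G) > s + t + 1. Then for every x ∈ [0,1]^V the identity f₁(x) − g₁(x) = Σ_{v ∈ V} ( x_v·(d(v) − (s+t+1)) + (s+t+1)·p̄ ) − |E| holds, and consequently f₁ − g₁ is coordinatewise increasing on [0,1]^V: whenever x, y ∈ [0,1]^V satisfy x_v ≤ y_v for all v ∈ V, then f₁(x) − g₁(x) ≤ f₁(y) − g₁(y), with strict inequality if x ≠ y. -/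
open Finset

/-- `f₁(x) = Σ_{uv ∈ E} x_u x_v - (s+t+1) p Σ_{v ∈ V} x_v` where `p = (s+1)/(s+t+2)`,
each edge counted once. -/
noncomputable def SimpleGraph.f1 {V : Type*} [Fintype V] (G : SimpleGraph V)
    (s t : ℝ) (x : V → ℝ) : ℝ :=
  letI := Classical.decEq V
  letI : DecidableRel G.Adj := Classical.decRel _
  (∑ e ∈ G.edgeFinset, Sym2.lift ⟨fun u v => x u * x v, fun _ _ => mul_comm _ _⟩ e)
    - (s + t + 1) * ((s + 1) / (s + t + 2)) * ∑ v, x v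

/-- `g₁(x) = Σ_{uv ∈ E} (1-x_u)(1-x_v) - (s+t+1) p̄ Σ_{v ∈ V} (1-x_v)` where
`p̄ = (t+1)/(s+t+2)`, each edge counted once. -/
noncomputable def SimpleGraph.g1 {V : Type*} [Fintype V] (G : SimpleGraph V)
    (s t : ℝ) (x : V → ℝ) : ℝ :=
  letI := Classical.decEq V
  letI : DecidableRel G.Adj := Classical.decRel _
  (∑ e ∈ G.edgeFinset,
      Sym2.lift ⟨fun u v => (1 - x u) * (1 - x v), fun _ _ => mul_comm _ _⟩ e)
    - (s + t + 1) * ((t + 1) / (s + t + 2)) * ∑ v, (1 - x v)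

/-!
Edgewise `x_u x_v - (1 - x_u)(1 - x_v) = x_u + x_v - 1`, and summing `x_u + x_v` over the edges
counts each `x_v` exactly `d(v)` times (each edge carries two darts). Since `p + p̄ = 1`, the
linear terms of `f₁ - g₁` then collect into `Σ_v x_v (d(v) - (s+t+1))` plus a constant: an affine
function whose coefficients are all positive once `δ(G) > s + t + 1`, hence strictly increasing.
-/

theorem Finset.strictMono_sum_apply {ι M N : Type*} [Fintype ι] [PartialOrder M]
    [AddCommMonoid N] [Preorder N] [IsOrderedCancelAddMonoid N] [AddLeftStrictMono N]
    {φ : ι → M → N} (hφ : ∀ i, StrictMono (φ i)) :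
    StrictMono fun x : ι → M => ∑ i, φ i (x i) := by
  intro x y hxy
  obtain ⟨hle, i, hi⟩ := Pi.lt_def.1 hxy
  exact sum_lt_sum (fun j _ => (hφ j).monotone (hle j)) ⟨i, mem_univ i, hφ i hi⟩

namespace SimpleGraph

variable {V : Type*} [Fintype V] (G : SimpleGraph V) [DecidableRel G.Adj]

theorem sum_dart_fst_eq_sum_degree_smul {M : Type*} [AddCommMonoid M] (x : V → M) :
    ∑ d : G.Dart, x d.fst = ∑ v, G.degree v • x v := by
  have := Classical.decEq V
  rw [← sum_fiberwise univ fun d : G.Dart => d.fst]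
  refine sum_congr rfl fun v _ => ?_
  rw [sum_congr rfl fun d hd => congrArg x (mem_filter.1 hd).2, sum_const,
    dart_fst_fiber_card_eq_degree]

theorem sum_dart_fst_eq_sum_edgeFinset {M : Type*} [AddCommMonoid M] (x : V → M) :
    ∑ d : G.Dart, x d.fst =
      ∑ e ∈ G.edgeFinset, Sym2.lift ⟨fun u v => x u + x v, fun _ _ => add_comm _ _⟩ e := by
  have := Classical.decEq V
  rw [← sum_fiberwise_of_maps_to (g := Dart.edge) (t := G.edgeFinset) (by simp)]
  refine sum_congr rfl fun e he => ?_
  induction e using Sym2.ind with | _ u v =>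
  let d : G.Dart := ⟨(u, v), mem_edgeFinset.1 he⟩
  rw [show s(u, v) = d.edge from rfl, d.edge_fiber, sum_pair d.symm_ne.symm]
  rfl

theorem sum_edgeFinset_lift_add {M : Type*} [AddCommMonoid M] (x : V → M) :
    ∑ e ∈ G.edgeFinset, Sym2.lift ⟨fun u v => x u + x v, fun _ _ => add_comm _ _⟩ e =
      ∑ v, G.degree v • x v :=
  (G.sum_dart_fst_eq_sum_edgeFinset x).symm.trans (G.sum_dart_fst_eq_sum_degree_smul x)

theorem sum_edgeFinset_lift_mul_sub_lift_one_sub_mul {R : Type*} [CommRing R] (x : V → R) :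
    ∑ e ∈ G.edgeFinset, Sym2.lift ⟨fun u v => x u * x v, fun _ _ => mul_comm _ _⟩ e -
        ∑ e ∈ G.edgeFinset,
          Sym2.lift ⟨fun u v => (1 - x u) * (1 - x v), fun _ _ => mul_comm _ _⟩ e =
      ∑ v, (G.degree v : R) * x v - #G.edgeFinset := by
  rw [← sum_sub_distrib]
  calc _ = ∑ e ∈ G.edgeFinset,
        (Sym2.lift ⟨fun u v => x u + x v, fun _ _ => add_comm _ _⟩ e - 1) := by
        refine sum_congr rfl fun e _ => ?_
        induction e using Sym2.ind with | _ u v =>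
        simp only [Sym2.lift_mk]
        ring
    _ = _ := by
        simp only [sum_sub_distrib, sum_edgeFinset_lift_add, nsmul_eq_mul, sum_const, mul_one]

/-- `f1` and `g1` are defined with classical decidability instances; these restate them with the
ambient ones. -/
theorem f1_eq (s t : ℝ) (x : V → ℝ) :
    G.f1 s t x =
      ∑ e ∈ G.edgeFinset, Sym2.lift ⟨fun u v => x u * x v, fun _ _ => mul_comm _ _⟩ e -
        (s + t + 1) * ((s + 1) / (s + t + 2)) * ∑ v, x v := by
  unfold f1
  congr!

theorem g1_eq (s t : ℝ) (x : V → ℝ) :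
    G.g1 s t x =
      ∑ e ∈ G.edgeFinset,
          Sym2.lift ⟨fun u v => (1 - x u) * (1 - x v), fun _ _ => mul_comm _ _⟩ e -
        (s + t + 1) * ((t + 1) / (s + t + 2)) * ∑ v, (1 - x v) := by
  unfold g1
  congr!

theorem f1_sub_g1_eq {s t : ℝ} (hst : s + t + 2 ≠ 0) (x : V → ℝ) :
    G.f1 s t x - G.g1 s t x =
      ∑ v, (x v * ((G.degree v : ℝ) - (s + t + 1)) + (s + t + 1) * ((t + 1) / (s + t + 2))) -
        #G.edgeFinset := by
  have hedges := G.sum_edgeFinset_lift_mul_sub_lift_one_sub_mul x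
  have hp : (s + 1) / (s + t + 2) + (t + 1) / (s + t + 2) = 1 := by
    field_simp
    ring
  have hcompl : ∑ v, (1 - x v) = Fintype.card V - ∑ v, x v := by
    simp only [sum_sub_distrib, sum_const, card_univ, nsmul_one]
  have hlinear : ∑ v, (x v * ((G.degree v : ℝ) - (s + t + 1)) +
      (s + t + 1) * ((t + 1) / (s + t + 2))) = ∑ v, (G.degree v : ℝ) * x v -
        (s + t + 1) * ∑ v, x v + Fintype.card V * ((s + t + 1) * ((t + 1) / (s + t + 2))) := by
    rw [sum_add_distrib, sum_const, card_univ, nsmul_eq_mul, mul_sum, ← sum_sub_distrib]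
    congr 1
    exact sum_congr rfl fun v _ => by ring
  rw [f1_eq, g1_eq, hcompl, hlinear]
  linear_combination hedges - (s + t + 1) * (∑ v, x v) * hp

end SimpleGraph

theorem f1_sub_g1_increasing_general {V : Type*} [Fintype V]
    (G : SimpleGraph V) [DecidableRel G.Adj] (s t : ℝ) (hs : 0 < s) (ht : 0 < t)
    (hdeg : s + t + 1 < (G.minDegree : ℝ)) :
    (∀ x : V → ℝ, (∀ v, x v ∈ Set.Icc (0 : ℝ) 1) →
      G.f1 s t x - G.g1 s t x =
        (∑ v, (x v * ((G.degree v : ℝ) - (s + t + 1)) +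
          (s + t + 1) * ((t + 1) / (s + t + 2)))) - (G.edgeFinset.card : ℝ)) ∧
    (∀ x y : V → ℝ, (∀ v, x v ∈ Set.Icc (0 : ℝ) 1) → (∀ v, y v ∈ Set.Icc (0 : ℝ) 1) →
      (∀ v, x v ≤ y v) →
      G.f1 s t x - G.g1 s t x ≤ G.f1 s t y - G.g1 s t y ∧
      (x ≠ y → G.f1 s t x - G.g1 s t x < G.f1 s t y - G.g1 s t y)) := by
  have hid := G.f1_sub_g1_eq (s := s) (t := t) (by positivity)
  have hslope (v : V) : 0 < (G.degree v : ℝ) - (s + t + 1) := by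
    have : (G.minDegree : ℝ) ≤ G.degree v := by exact_mod_cast G.minDegree_le_degree v
    linarith
  have hmono : StrictMono fun x => G.f1 s t x - G.g1 s t x := by
    simp only [hid, sub_eq_add_neg _ (#G.edgeFinset : ℝ)]
    exact (strictMono_sum_apply fun v =>
      (strictMono_mul_right_of_pos (hslope v)).add_const _).add_const _
  exact ⟨fun x _ => hid x, fun x y _ _ hxy =>
    ⟨hmono.monotone hxy, fun hne => hmono (lt_of_le_of_ne hxy hne)⟩⟩

/-- If `δ(G) > s + t + 1`, then on `[0,1]^V` the identity
`f₁(x) - g₁(x) = Σ_v (x_v (d(v) - (s+t+1)) + (s+t+1) p̄) - |E|` holds, and `f₁ - g₁` is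
coordinatewise increasing, strictly so for distinct comparable points. -/
theorem f1_sub_g1_increasing {V : Type*} [Fintype V] [DecidableEq V] [Nonempty V]
    (G : SimpleGraph V) [DecidableRel G.Adj] (s t : ℝ) (hs : 0 < s) (ht : 0 < t)
    (hdeg : s + t + 1 < (G.minDegree : ℝ)) :
    (∀ x : V → ℝ, (∀ v, x v ∈ Set.Icc (0 : ℝ) 1) →
      G.f1 s t x - G.g1 s t x =
        (∑ v, (x v * ((G.degree v : ℝ) - (s + t + 1)) +
          (s + t + 1) * ((t + 1) / (s + t + 2)))) - (G.edgeFinset.card : ℝ)) ∧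
    (∀ x y : V → ℝ, (∀ v, x v ∈ Set.Icc (0 : ℝ) 1) → (∀ v, y v ∈ Set.Icc (0 : ℝ) 1) →
      (∀ v, x v ≤ y v) →
      G.f1 s t x - G.g1 s t x ≤ G.f1 s t y - G.g1 s t y ∧
      (x ≠ y → G.f1 s t x - G.g1 s t x < G.f1 s t y - G.g1 s t y)) :=
  f1_sub_g1_increasing_general G s t hs ht hdeg
end

section
/- Let s, t be real numbers with s, t > 1/2, p := (s+1)/(s+t+2), p̄ := (t+1)/(s+t+2). Let T and n be reals with 0 ≤ T ≤ s + t + 2 and n ≥ s + t + 2 + T, and let S be a real with S ≥ 2(s+t+1)·p and n − S ≥ 2(s+t+1)·p̄. Define X := p²·T − p(1−p)·T/(2s+2t+4), Y := p̄²·T − p(1−p)·T/(2s+2t+4), A := S − (s+t+1)·p − 1/2, and B := (n − S) − (s+t+1)·p̄ − 1/2. Then: X ≥ 0; Y ≥ 0; A ≥ (s+t+1)·p − 1/2 > 0; B ≥ (s+t+1)·p̄ − 1/2 > 0; A + B = n − (s+t+2) ≥ T; and X + Y + A·p̄ + B·p ≥ T − 7/12. -/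
/-!
Write `L = s + t + 1`, so that `p = (s + 1)/(L + 1)` and `X + Y = (p² + p̄²) T - p p̄ T/(L + 1)`.
The last bound only uses `p + p̄ = 1`, `T ≤ L + 1`, `A ≥ L p - 1/2`, `B ≥ L p̄ - 1/2` and
`A + B ≥ T`. After `p p̄ T/(L + 1) ≤ p p̄`, the slack is at least `p p̄ (2L - 2T - 1) + 1/12 ≥ 0`
when `T ≤ L - 1`; otherwise, with `m = min p p̄`, it is at least
`3 (m - 1/6)² + m (L + 1 - T) (1 - 2m)`, which is where `7/12` comes from.
-/

theorem sub_seven_div_twelve_le_weighted_sum (L p q T A B : ℝ) (hp : 0 ≤ p) (hq : 0 ≤ q)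
    (hpq : p + q = 1) (hT0 : 0 ≤ T) (hTL : T ≤ L + 1) (hA : L * p - 1 / 2 ≤ A)
    (hB : L * q - 1 / 2 ≤ B) (hAB : T ≤ A + B) :
    T - 7 / 12 ≤ (p ^ 2 + q ^ 2) * T - p * q * T / (L + 1) + A * q + B * p := by
  wlog hle : p ≤ q generalizing p q A B
  · have := this q p B A hq hp (by linarith) hB hA (by linarith) (by linarith)
    rw [mul_comm q p, add_comm (q ^ 2)] at this
    linarith
  obtain rfl : q = 1 - p := by linarith
  have hpq0 : 0 ≤ p * (1 - p) := mul_nonneg hp hq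
  have hfrac : p * (1 - p) * T / (L + 1) ≤ p * (1 - p) :=
    div_le_of_le_mul₀ (by linarith) hpq0 (by nlinarith)
  rcases le_or_gt T (L - 1) with hT | hT
  · have hAq_Bp : 2 * L * p * (1 - p) - 1 / 2 ≤ A * (1 - p) + B * p := by
      nlinarith [mul_le_mul_of_nonneg_right hA hq, mul_le_mul_of_nonneg_right hB hp]
    nlinarith [mul_nonneg hpq0 (sub_nonneg.2 hT)]
  · have h12p : 0 ≤ 1 - 2 * p := by linarith
    have hAq_Bp : p * T + (1 - 2 * p) * (L * p - 1 / 2) ≤ A * (1 - p) + B * p := by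
      nlinarith [mul_le_mul_of_nonneg_left hAB hp, mul_le_mul_of_nonneg_left hA h12p]
    nlinarith [sq_nonneg (p - 1 / 6), mul_nonneg (mul_nonneg hp (sub_nonneg.2 hTL)) h12p]

theorem sq_mul_sub_mul_div_nonneg (p q T c : ℝ) (hp : 0 ≤ p) (hT : 0 ≤ T) (hc : 0 < c)
    (hq : q ≤ c * p) : 0 ≤ p ^ 2 * T - p * q * T / c := by
  rw [sub_nonneg, div_le_iff₀ hc]
  nlinarith [mul_nonneg (mul_nonneg hp hT) (sub_nonneg.2 hq)]

theorem one_half_lt_mul_div_add_one (L a : ℝ) (hL : 1 < L) (ha : 1 ≤ a) :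
    1 / 2 < L * (a / (L + 1)) := by
  rw [← mul_div_assoc, lt_div_iff₀ (by linarith)]
  nlinarith

/-- Arithmetic estimates for the quantities `X`, `Y`, `A`, `B` built from `s, t > 1/2`,
`p = (s+1)/(s+t+2)`, `p̄ = (t+1)/(s+t+2)`, `0 ≤ T ≤ s+t+2`, `n ≥ s+t+2+T`,
`S ≥ 2(s+t+1)p` and `n - S ≥ 2(s+t+1)p̄`:
`X, Y ≥ 0`; `A ≥ (s+t+1)p - 1/2 > 0`; `B ≥ (s+t+1)p̄ - 1/2 > 0`;
`A + B = n - (s+t+2) ≥ T`; and `X + Y + A p̄ + B p ≥ T - 7/12`. -/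
theorem arithmetic_bounds (s t p pb T n S X Y A B : ℝ)
    (hs : 1 / 2 < s) (ht : 1 / 2 < t)
    (hp : p = (s + 1) / (s + t + 2)) (hpb : pb = (t + 1) / (s + t + 2))
    (hT0 : 0 ≤ T) (hT1 : T ≤ s + t + 2)
    (hn : s + t + 2 + T ≤ n)
    (hS1 : 2 * (s + t + 1) * p ≤ S) (hS2 : 2 * (s + t + 1) * pb ≤ n - S)
    (hX : X = p ^ 2 * T - p * (1 - p) * T / (2 * s + 2 * t + 4))
    (hY : Y = pb ^ 2 * T - p * (1 - p) * T / (2 * s + 2 * t + 4))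
    (hA : A = S - (s + t + 1) * p - 1 / 2)
    (hB : B = (n - S) - (s + t + 1) * pb - 1 / 2) :
    0 ≤ X ∧ 0 ≤ Y ∧
    ((s + t + 1) * p - 1 / 2 ≤ A ∧ 0 < (s + t + 1) * p - 1 / 2) ∧
    ((s + t + 1) * pb - 1 / 2 ≤ B ∧ 0 < (s + t + 1) * pb - 1 / 2) ∧
    (A + B = n - (s + t + 2) ∧ T ≤ A + B) ∧
    T - 7 / 12 ≤ X + Y + A * pb + B * p := by
  have hD : 0 < s + t + 2 := by linarith
  have hpD : p * (s + t + 2) = s + 1 := by rw [hp]; field_simp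
  have hpbD : pb * (s + t + 2) = t + 1 := by rw [hpb]; field_simp
  have hsum : p + pb = 1 := by
    rw [hp, hpb, ← add_div, div_eq_one_iff_eq hD.ne']; ring
  have hp0 : 0 < p := by rw [hp]; positivity
  have hpb0 : 0 < pb := by rw [hpb]; positivity
  have hApos : 1 / 2 < (s + t + 1) * p := by
    rw [hp, show s + t + 2 = s + t + 1 + 1 by ring]
    exact one_half_lt_mul_div_add_one _ _ (by linarith) (by linarith)
  have hBpos : 1 / 2 < (s + t + 1) * pb := by
    rw [hpb, show s + t + 2 = s + t + 1 + 1 by ring]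
    exact one_half_lt_mul_div_add_one _ _ (by linarith) (by linarith)
  have hAB : A + B = n - (s + t + 2) := by
    rw [hA, hB]; linear_combination (-(s + t + 1)) * hsum
  have hX0 : 0 ≤ X := by
    rw [hX]
    exact sq_mul_sub_mul_div_nonneg p (1 - p) T _ hp0.le hT0 (by linarith) (by linarith)
  have hY0 : 0 ≤ Y := by
    rw [hY, show 1 - p = pb by linarith, mul_comm p pb]
    exact sq_mul_sub_mul_div_nonneg pb p T _ hpb0.le hT0 (by linarith) (by linarith)
  have hXY : X + Y = (p ^ 2 + pb ^ 2) * T - p * pb * T / (s + t + 1 + 1) := by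
    rw [hX, hY, show 1 - p = pb by linarith]; field_simp; ring
  refine ⟨hX0, hY0, ⟨by rw [hA]; linarith, by linarith⟩, ⟨by rw [hB]; linarith, by linarith⟩,
    ⟨hAB, by linarith⟩, ?_⟩
  rw [hXY]
  exact sub_seven_div_twelve_le_weighted_sum _ _ _ _ _ _ hp0.le hpb0.le hsum hT0 (by linarith)
    (by rw [hA]; linarith) (by rw [hB]; linarith) (by linarith)
end

section
/- Let s, t be positive integers and n an integer with n ≥ s + t + 2. Let H = (V, E) be the graph on n vertices obtained as the complete join of a clique X of size s + t + 1 with an independent set Y of size n − (s + t + 1); that is, V = X ∪ Y with X, Y disjoint, and uv ∈ E if and only if u ∈ X or v ∈ X (and u ≠ v). Then ‖V‖ = (s+t+1)(s+t)/2 + (n − s − t − 1)(s + t + 1), and there is no partition (V₁, V₂) of V with V₁, V₂ both nonempty such that ‖V₁‖ ≥ s·|V₁| and ‖V₂‖ ≥ t·|V₂|. -/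
/-! The complement of `H` is the clique on `V \ X`, so a vertex set `A` with `a` vertices in `X`
and `y` outside spans `‖A‖ = C(a + y, 2) - C(y, 2) = C(a, 2) + a y` edges. If `a ≤ s` and `A` is
nonempty this is less than `s (a + y) = s |A|`. Since `X` has `s + t + 1` vertices, any partition
`(V₁, V₂)` has `|V₁ ∩ X| ≤ s` or `|V₂ ∩ X| ≤ t`, so one of the two inequalities fails. -/

open Finset

lemma lt_mul_of_add_choose_two_eq {s a y e : ℕ} (hs : 0 < s) (ha : a ≤ s) (hay : 0 < a + y)
    (he : e + y.choose 2 = (a + y).choose 2) : e < s * (a + y) := by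
  have he' : (e : ℚ) = a * (a - 1) / 2 + a * y := by
    have := congrArg (Nat.cast (R := ℚ)) he
    push_cast [Nat.cast_choose_two] at this
    linear_combination this
  have hsy : a * y ≤ s * y := Nat.mul_le_mul_right y ha
  qify at ha hs hay hsy ⊢
  nlinarith

namespace SimpleGraph

variable {V : Type*}

section

variable (G : SimpleGraph V) (A : Finset V)

lemma edgesIn_eq_card_filter_sym2 [DecidableEq V] [DecidablePred (· ∈ G.edgeSet)] :
    G.edgesIn A = #{e ∈ A.sym2 | e ∈ G.edgeSet} := by
  rw [edgesIn, ← Set.ncard_coe_finset]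
  congr 1
  ext e
  simp [Finset.mem_sym2_iff, and_comm]

lemma edgesIn_add_edgesIn_compl : G.edgesIn A + Gᶜ.edgesIn A = (#A).choose 2 := by
  classical
  rw [edgesIn_eq_card_filter_sym2, edgesIn_eq_card_filter_sym2, ← Sym2.card_image_offDiag,
    ← Sym2.filter_image_mk_not_isDiag, ← sym2_eq_image,
    ← card_filter_add_card_filter_not (s := {x ∈ A.sym2 | ¬x.IsDiag}) (· ∈ G.edgeSet),
    filter_filter, filter_filter]
  congr 2 <;> ext e
  · simpa using fun _ => G.not_isDiag_of_mem_edgeSet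
  · induction e using Sym2.ind
    simp

@[simp] lemma edgesIn_bot : (⊥ : SimpleGraph V).edgesIn A = 0 := by
  simp [edgesIn]

lemma edgesIn_top : (⊤ : SimpleGraph V).edgesIn A = (#A).choose 2 := by
  simpa using edgesIn_add_edgesIn_compl ⊤ A

end

section CompleteJoin

variable [DecidableEq V] (H : SimpleGraph V) {X : Finset V}
  (hadj : ∀ u v : V, H.Adj u v ↔ u ≠ v ∧ (u ∈ X ∨ v ∈ X))
include hadj

lemma edgesIn_compl_eq_edgesIn_top_sdiff (A : Finset V) :
    Hᶜ.edgesIn A = (⊤ : SimpleGraph V).edgesIn (A \ X) := by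
  unfold edgesIn
  congr 1
  ext e
  induction e using Sym2.ind
  simp only [Set.mem_ofPred_eq, mem_edgeSet, compl_adj, hadj, top_adj, Sym2.mem_iff, mem_sdiff]
  grind

lemma edgesIn_add_choose_two_card_sdiff (A : Finset V) :
    H.edgesIn A + (#(A \ X)).choose 2 = (#A).choose 2 := by
  rw [← edgesIn_top, ← H.edgesIn_compl_eq_edgesIn_top_sdiff hadj, edgesIn_add_edgesIn_compl]

lemma edgesIn_lt_of_card_inter_le {s : ℕ} (hs : 0 < s) {A : Finset V} (hA : A.Nonempty)
    (hAX : #(A ∩ X) ≤ s) : H.edgesIn A < s * #A := by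
  have hsplit := card_inter_add_card_sdiff A X
  rw [← hsplit]
  refine lt_mul_of_add_choose_two_eq hs hAX (hsplit ▸ card_pos.2 hA) ?_
  rw [hsplit]
  exact H.edgesIn_add_choose_two_card_sdiff hadj A

end CompleteJoin

end SimpleGraph

theorem sharpness_example_general {V : Type*} [Fintype V] [DecidableEq V] (s t n : ℕ)
    (hs : 0 < s) (ht : 0 < t) (hcard : Fintype.card V = n)
    (H : SimpleGraph V) (X : Finset V) (hX : X.card = s + t + 1)
    (hadj : ∀ u v : V, H.Adj u v ↔ u ≠ v ∧ (u ∈ X ∨ v ∈ X)) :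
    (H.edgesIn Finset.univ : ℝ) =
      ((s : ℝ) + t + 1) * ((s : ℝ) + t) / 2 + ((n : ℝ) - s - t - 1) * ((s : ℝ) + t + 1) ∧
    ¬ ∃ V₁ V₂ : Finset V, V₁.Nonempty ∧ V₂.Nonempty ∧ Disjoint V₁ V₂ ∧
      V₁ ∪ V₂ = Finset.univ ∧
      (s : ℝ) * V₁.card ≤ (H.edgesIn V₁ : ℝ) ∧ (t : ℝ) * V₂.card ≤ (H.edgesIn V₂ : ℝ) := by
  have hk : s + t + 1 ≤ n := hcard ▸ hX ▸ card_le_univ X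
  refine ⟨?_, ?_⟩
  · have h := H.edgesIn_add_choose_two_card_sdiff hadj univ
    rw [← compl_eq_univ_sdiff, card_compl, card_univ, hcard, hX] at h
    have h' := congrArg (Nat.cast (R := ℝ)) h
    push_cast [Nat.cast_choose_two, Nat.cast_sub hk] at h'
    linear_combination h'
  · rintro ⟨V₁, V₂, hV₁, hV₂, hdisj, hunion, hs₁, ht₂⟩
    have hsplit : #(V₁ ∩ X) + #(V₂ ∩ X) = s + t + 1 := by
      rw [← hX, ← card_union_of_disjoint (hdisj.mono inter_subset_left inter_subset_left),
        ← union_inter_distrib_right, hunion, univ_inter]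
    rcases le_or_gt #(V₁ ∩ X) s with h₁ | h₁
    · exact (H.edgesIn_lt_of_card_inter_le hadj hs hV₁ h₁).not_ge (by exact_mod_cast hs₁)
    · exact (H.edgesIn_lt_of_card_inter_le hadj ht hV₂ (by omega)).not_ge (by exact_mod_cast ht₂)

/-- Sharpness example: the complete join `H` of a clique `X` of size `s+t+1` with an
independent set of size `n - (s+t+1)` has
`‖V‖ = (s+t+1)(s+t)/2 + (n-s-t-1)(s+t+1)`, and admits no partition `(V₁, V₂)` into
nonempty parts with `‖V₁‖ ≥ s|V₁|` and `‖V₂‖ ≥ t|V₂|`. -/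
theorem sharpness_example {V : Type*} [Fintype V] [DecidableEq V] (s t n : ℕ)
    (hs : 0 < s) (ht : 0 < t) (hn : s + t + 2 ≤ n) (hcard : Fintype.card V = n)
    (H : SimpleGraph V) (X : Finset V) (hX : X.card = s + t + 1)
    (hadj : ∀ u v : V, H.Adj u v ↔ u ≠ v ∧ (u ∈ X ∨ v ∈ X)) :
    (H.edgesIn Finset.univ : ℝ) =
      ((s : ℝ) + t + 1) * ((s : ℝ) + t) / 2 + ((n : ℝ) - s - t - 1) * ((s : ℝ) + t + 1) ∧
    ¬ ∃ V₁ V₂ : Finset V, V₁.Nonempty ∧ V₂.Nonempty ∧ Disjoint V₁ V₂ ∧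
      V₁ ∪ V₂ = Finset.univ ∧
      (s : ℝ) * V₁.card ≤ (H.edgesIn V₁ : ℝ) ∧ (t : ℝ) * V₂.card ≤ (H.edgesIn V₂ : ℝ) :=
  sharpness_example_general s t n hs ht hcard H X hX hadj
end
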